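/- arXiv:math-ph/0311052 — 6 statements merged into one kernel-verified Lean document; each statement's English description precedes it below -/
import Mathlib

section
/- Let z ∈ ℂ³ with z² = −1, and suppose the imaginary part y = Im z satisfies y² > 0 and y₀ > 0 (i.e. z lies in the Lorentz tuboid 𝒯⁺), and let z' ∈ ℂ³ with z'² = −1, Im z' ∈ V⁻ (i.e. z' ∈ 𝒯⁻). Then [z·z'] is not a real number ≤ −1; equivalently (z − z')² ∉ [0, ∞). -/
/-! With `d = z − z'`, one has `d² = z² + z'² − 2[z·z'] = −2([z·z'] + 1)`, so it suffices to show
that `d²` is not a nonnegative real. Its imaginary part `b = Im z − Im z'` is a sum of two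
future timelike vectors, hence timelike. Writing `d = a + i b`, `Im d² = 2[a·b]` and
`Re d² = a² − b²`; if `d²` is real then `a ⊥ b`, so `a` is spacelike or zero and
`Re d² ≤ −b² < 0`. -/

open Complex

lemma minkowski_sq_add_pos {y0 y1 y2 u0 u1 u2 : ℝ}
    (hy : y0 ^ 2 - y1 ^ 2 - y2 ^ 2 > 0) (hy0 : y0 > 0)
    (hu : u0 ^ 2 - u1 ^ 2 - u2 ^ 2 > 0) (hu0 : u0 > 0) :
    (y0 + u0) ^ 2 - (y1 + u1) ^ 2 - (y2 + u2) ^ 2 > 0 := by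
  nlinarith [sq_nonneg (y1 * u2 - y2 * u1), mul_pos hy0 hu0, mul_pos hy hu,
    sq_nonneg (y0 * u0 - y1 * u1 - y2 * u2), sq_nonneg (y1 * u1 + y2 * u2)]

lemma minkowski_sq_nonpos_of_orthogonal {a0 a1 a2 b0 b1 b2 : ℝ}
    (hb : b0 ^ 2 - b1 ^ 2 - b2 ^ 2 > 0) (hab : a0 * b0 - a1 * b1 - a2 * b2 = 0) :
    a0 ^ 2 - a1 ^ 2 - a2 ^ 2 ≤ 0 := by
  by_contra! ha
  have hb0 : b0 ^ 2 > 0 := by nlinarith [sq_nonneg b1, sq_nonneg b2]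
  have hab_sq : (a0 * b0) ^ 2 = (a1 * b1 + a2 * b2) ^ 2 := by
    rw [show a0 * b0 = a1 * b1 + a2 * b2 by linarith]
  nlinarith [mul_pos ha hb0, sq_nonneg (a1 * b2 - a2 * b1),
    mul_nonneg (add_nonneg (sq_nonneg a1) (sq_nonneg a2)) hb.le]

lemma minkowski_sq_not_nonneg_real_of_im_timelike {d0 d1 d2 : ℂ}
    (hb : d0.im ^ 2 - d1.im ^ 2 - d2.im ^ 2 > 0) :
    ¬∃ s : ℝ, 0 ≤ s ∧ d0 ^ 2 - d1 ^ 2 - d2 ^ 2 = (s : ℂ) := by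
  rintro ⟨s, hs, hd⟩
  rw [Complex.ext_iff] at hd
  simp only [pow_two, sub_re, sub_im, mul_re, mul_im, ofReal_re, ofReal_im] at hd
  obtain ⟨hre, him⟩ := hd
  have ha := minkowski_sq_nonpos_of_orthogonal hb (a0 := d0.re) (a1 := d1.re) (a2 := d2.re)
    (by linarith)
  nlinarith

/-- For `z ∈ 𝒯⁺` and `z' ∈ 𝒯⁻` on the complex hyperboloid, `[z·z']` is never a
real number `≤ −1`. -/
theorem stmt_3 (z0 z1 z2 w0 w1 w2 : ℂ)
    (hz : z0 ^ 2 - z1 ^ 2 - z2 ^ 2 = -1)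
    (hw : w0 ^ 2 - w1 ^ 2 - w2 ^ 2 = -1)
    (hzV : z0.im ^ 2 - z1.im ^ 2 - z2.im ^ 2 > 0 ∧ z0.im > 0)
    (hwV : w0.im ^ 2 - w1.im ^ 2 - w2.im ^ 2 > 0 ∧ w0.im < 0) :
    ¬∃ r : ℝ, r ≤ -1 ∧ z0 * w0 - z1 * w1 - z2 * w2 = (r : ℂ) := by
  rintro ⟨r, hr, hzw⟩
  have him_timelike : (z0 - w0).im ^ 2 - (z1 - w1).im ^ 2 - (z2 - w2).im ^ 2 > 0 := by
    have := minkowski_sq_add_pos hzV.1 hzV.2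
      (u0 := -w0.im) (u1 := -w1.im) (u2 := -w2.im) (by linarith [hwV.1]) (by linarith [hwV.2])
    simpa [sub_eq_add_neg] using this
  refine minkowski_sq_not_nonneg_real_of_im_timelike him_timelike ⟨-2 * (r + 1), by linarith, ?_⟩
  push_cast
  linear_combination hz + hw - 2 * hzw
end

section
/- Let Z = X + iY ∈ ℂ³ with Y² > 0 (Minkowski form, signature (+,−,−)). Then Z² ∉ [0, ∞); in particular Z² (which equals X² − Y² + 2i[X·Y]) cannot be a nonnegative real number. -/
/-!
Write `Z = X + iY`, so that `Z² = X² − Y² + 2i[X·Y]`. If `Z²` were a nonnegative real, then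
`[X·Y] = 0` and `X² ≥ Y² > 0`. But Cauchy–Schwarz on the spatial parts shows that a vector
Minkowski-orthogonal to a timelike vector satisfies `X² ≤ 0`.
-/

open Complex

theorem sq_le_norm_sq_of_mul_eq_inner_of_norm_lt {E : Type*} [NormedAddCommGroup E]
    [InnerProductSpace ℝ E] {x₀ y₀ : ℝ} {x y : E} (hy : ‖y‖ < |y₀|)
    (hxy : x₀ * y₀ = inner ℝ x y) : x₀ ^ 2 ≤ ‖x‖ ^ 2 := by
  have hy₀ : 0 < |y₀| := (norm_nonneg y).trans_lt hy
  have key : |x₀| * |y₀| ≤ ‖x‖ * |y₀| :=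
    calc |x₀| * |y₀| = |inner ℝ x y| := by rw [← abs_mul, hxy]
      _ ≤ ‖x‖ * ‖y‖ := abs_real_inner_le_norm x y
      _ ≤ ‖x‖ * |y₀| := by gcongr
  have hx : |x₀| ≤ ‖x‖ := le_of_mul_le_mul_right key hy₀
  exact sq_le_sq' (neg_le_of_abs_le hx) (le_of_abs_le hx)

theorem minkowski_sq_nonpos_of_orthogonal_timelike {x₀ x₁ x₂ y₀ y₁ y₂ : ℝ}
    (hy : y₁ ^ 2 + y₂ ^ 2 < y₀ ^ 2) (hxy : x₀ * y₀ = x₁ * y₁ + x₂ * y₂) :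
    x₀ ^ 2 ≤ x₁ ^ 2 + x₂ ^ 2 := by
  have norm_sq (a b : ℝ) : ‖!₂[a, b]‖ ^ 2 = a ^ 2 + b ^ 2 := by
    simp [EuclideanSpace.norm_sq_eq, Fin.sum_univ_two]
  have inner_eq : inner ℝ !₂[x₁, x₂] !₂[y₁, y₂] = x₁ * y₁ + x₂ * y₂ := by
    simp [PiLp.inner_apply, Fin.sum_univ_two, mul_comm]
  rw [← norm_sq]
  refine sq_le_norm_sq_of_mul_eq_inner_of_norm_lt ?_ (hxy.trans inner_eq.symm)
  rw [← norm_sq] at hy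
  simpa only [abs_norm] using sq_lt_sq.mp hy

theorem re_sq_sub_sq_sub_sq (z₀ z₁ z₂ : ℂ) :
    (z₀ ^ 2 - z₁ ^ 2 - z₂ ^ 2).re =
      (z₀.re ^ 2 - z₁.re ^ 2 - z₂.re ^ 2) - (z₀.im ^ 2 - z₁.im ^ 2 - z₂.im ^ 2) := by
  simp only [sub_re, pow_two, mul_re]
  ring

theorem im_sq_sub_sq_sub_sq (z₀ z₁ z₂ : ℂ) :
    (z₀ ^ 2 - z₁ ^ 2 - z₂ ^ 2).im = 2 * (z₀.re * z₀.im - z₁.re * z₁.im - z₂.re * z₂.im) := by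
  simp only [sub_im, pow_two, mul_im]
  ring

/-- If `Z = X + iY ∈ ℂ³` with `Y² > 0` (Minkowski), then `Z² ∉ [0,∞)`. -/
theorem stmt_4 (Z0 Z1 Z2 : ℂ)
    (hY : Z0.im ^ 2 - Z1.im ^ 2 - Z2.im ^ 2 > 0) :
    ¬∃ r : ℝ, 0 ≤ r ∧ Z0 ^ 2 - Z1 ^ 2 - Z2 ^ 2 = (r : ℂ) := by
  rintro ⟨r, hr, hZ⟩
  have hre := re_sq_sub_sq_sub_sq Z0 Z1 Z2
  have him := im_sq_sub_sq_sub_sq Z0 Z1 Z2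
  rw [hZ, ofReal_re] at hre
  rw [hZ, ofReal_im] at him
  have hX : Z0.re ^ 2 ≤ Z1.re ^ 2 + Z2.re ^ 2 :=
    minkowski_sq_nonpos_of_orthogonal_timelike (y₀ := Z0.im) (y₁ := Z1.im) (y₂ := Z2.im)
      (by linarith) (by linarith)
  linarith
end

section
/- Let λ, μ ∈ ℂ with Im λ < 0 and Im μ > 0, and let z = z(λ,μ) be given by z₀ = (1+λμ)/(λ−μ), z₁ = (1−λμ)/(λ−μ), z₂ = (λ+μ)/(λ−μ). Then for every real α with |α| < π, Im([z·ξ(α)]) > 0, where ξ(α) = (1, cos α, sin α). -/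
/-!
Put `c = cos (α/2) > 0` and `s = sin (α/2)`. Using `c² + s² = 1`, the numerator of `[z·ξ(α)]`
factors as `2 (c λ - s)(c μ - s)`, so `[z·ξ(α)] = 2c · AB/(A - B)` with `A = cλ - s`, `B = cμ - s`
still in the lower and upper half-planes. Finally `(AB/(A - B))⁻¹ = B⁻¹ - A⁻¹`, and inversion swaps
the two half-planes.
-/

namespace Complex

lemma im_inv_neg_of_im_pos {z : ℂ} (hz : 0 < z.im) : z⁻¹.im < 0 := by
  have hz0 : z ≠ 0 := fun h => by simp [h] at hz
  rw [inv_im]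
  exact div_neg_of_neg_of_pos (neg_neg_of_pos hz) (normSq_pos.2 hz0)

lemma im_pos_of_im_inv_neg {z : ℂ} (hz : z⁻¹.im < 0) : 0 < z.im := by
  rw [inv_im] at hz
  by_contra! h
  exact hz.not_ge (div_nonneg (neg_nonneg.2 h) (normSq_nonneg z))

lemma im_mul_div_sub_pos {a b : ℂ} (ha : a.im < 0) (hb : 0 < b.im) :
    0 < (a * b / (a - b)).im := by
  have ha0 : a ≠ 0 := fun h => by simp [h] at ha
  have hb0 : b ≠ 0 := fun h => by simp [h] at hb
  have hinv : (a * b / (a - b))⁻¹ = b⁻¹ - a⁻¹ := by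
    rw [inv_div]
    field_simp
  have ha' : 0 < a⁻¹.im := by
    rw [inv_im]
    exact div_pos (neg_pos.2 ha) (normSq_pos.2 ha0)
  apply im_pos_of_im_inv_neg
  rw [hinv, sub_im]
  linarith [im_inv_neg_of_im_pos hb]

lemma one_add_mul_sub_mul_cos_two_mul_sub_mul_sin_two_mul (l m θ : ℂ) :
    (1 + l * m) - (1 - l * m) * cos (2 * θ) - (l + m) * sin (2 * θ)
      = 2 * (cos θ * l - sin θ) * (cos θ * m - sin θ) := by
  rw [cos_two_mul, sin_two_mul]
  linear_combination (-2) * sin_sq_add_cos_sq θ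

lemma im_mul_sub_mul_sub_div_sub_pos {l m : ℂ} (hl : l.im < 0) (hm : 0 < m.im) {c : ℝ}
    (hc : 0 < c) (s : ℝ) : 0 < ((c * l - s) * (c * m - s) / (l - m)).im := by
  have hlm : l - m ≠ 0 := fun h => by simpa [sub_eq_zero.1 h] using hl.trans hm
  have hc0 : (c : ℂ) ≠ 0 := ofReal_ne_zero.2 hc.ne'
  have hrescale : (c * l - s) * (c * m - s) / (l - m)
      = c * ((c * l - s) * (c * m - s) / ((c * l - s) - (c * m - s))) := by
    rw [show (c * l - s : ℂ) - (c * m - s) = c * (l - m) by ring]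
    field_simp
  rw [hrescale, im_ofReal_mul]
  refine mul_pos hc (im_mul_div_sub_pos ?_ ?_) <;> simp [mul_neg_of_pos_of_neg, hc, hl, hm]

end Complex

open Complex in
/-- For `(λ,μ)` in the tube `τ^{−,+}` and `|α| < π`, `Im([z(λ,μ)·ξ(α)]) > 0`. -/
theorem stmt_9 (l m : ℂ) (hl : l.im < 0) (hm : m.im > 0) (α : ℝ) (hα : |α| < Real.pi) :
    ((1 + l * m) / (l - m) - ((1 - l * m) / (l - m)) * (Real.cos α : ℂ)
        - ((l + m) / (l - m)) * (Real.sin α : ℂ)).im > 0 := by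
  have hc : 0 < Real.cos (α / 2) := by
    apply Real.cos_pos_of_mem_Ioo
    constructor <;> linarith [abs_lt.1 hα]
  have hα2 : (α : ℂ) = 2 * ((α / 2 : ℝ) : ℂ) := by push_cast; ring
  have hfactor : (1 + l * m) / (l - m) - ((1 - l * m) / (l - m)) * (Real.cos α : ℂ)
        - ((l + m) / (l - m)) * (Real.sin α : ℂ)
      = 2 * ((Real.cos (α / 2) * l - Real.sin (α / 2)) * (Real.cos (α / 2) * m - Real.sin (α / 2))
        / (l - m)) := by
    rw [ofReal_cos, ofReal_sin, ofReal_cos, ofReal_sin, hα2]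
    linear_combination
      one_add_mul_sub_mul_cos_two_mul_sub_mul_sin_two_mul l m ((α / 2 : ℝ) : ℂ) / (l - m)
  rw [hfactor]
  simpa [mul_im] using im_mul_sub_mul_sub_div_sub_pos hl hm hc (Real.sin (α / 2))
end

section
/- Let λ, μ ∈ ℂ with Im λ > 0 and Im μ > 0, λ ≠ μ, and let z = z(λ,μ) be given by z₀ = (1+λμ)/(λ−μ), z₁ = (1−λμ)/(λ−μ), z₂ = (λ+μ)/(λ−μ). Then ε(z) := (i/2)(z₁ z̄₂ − z₂ z̄₁) = (Im λ (1 + |μ|²) + Im μ (1 + |λ|²)) / |λ − μ|², and in particular ε(z) > 0. -/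
/-!
Writing `w = z₁ z̄₂`, the bracket `z₁ z̄₂ − z₂ z̄₁ = w − w̄` equals `2i Im w`, so
`ε(z) = Im (z̄₁ z₂)`. For `z = (a/d, b/d)` this is `Im (ā b) / |d|²`, and with
`a = 1 − λμ`, `b = λ + μ` one has `ā b = λ + μ − |λ|² μ̄ − |μ|² λ̄`, whose imaginary part is
`Im λ (1 + |μ|²) + Im μ (1 + |λ|²)`.
-/

open Complex ComplexConjugate

namespace Complex

theorem I_div_two_mul_sub_mul_conj (a b : ℂ) :
    I / 2 * (a * conj b - b * conj a) = ((conj a * b).im : ℂ) := by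
  apply Complex.ext <;> simp <;> ring

theorem im_conj_div_mul_div (a b d : ℂ) :
    (conj (a / d) * (b / d)).im = (conj a * b).im / ‖d‖ ^ 2 := by
  rw [map_div₀, div_mul_div_comm, conj_mul', ← ofReal_pow, div_ofReal_im]

theorem im_conj_one_sub_mul_mul_add (l m : ℂ) :
    (conj (1 - l * m) * (l + m)).im = l.im * (1 + ‖m‖ ^ 2) + m.im * (1 + ‖l‖ ^ 2) := by
  simp only [Complex.sq_norm, normSq_apply, mul_im, map_sub, map_one, map_mul, sub_re, sub_im,
    one_re, one_im, mul_re, conj_re, conj_im, add_re, add_im]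
  ring

end Complex

/-- In the tube `τ^{+,+}`, the chirality function
`ε(z) = (i/2)(z₁ z̄₂ − z₂ z̄₁)` equals
`(Im λ (1+|μ|²) + Im μ (1+|λ|²))/|λ−μ|²`, which is positive. -/
theorem stmt_11 (l m : ℂ) (hl : 0 < l.im) (hm : 0 < m.im) (hlm : l ≠ m) :
    (I / 2) * (((1 - l * m) / (l - m)) * (starRingEnd ℂ) ((l + m) / (l - m))
        - ((l + m) / (l - m)) * (starRingEnd ℂ) ((1 - l * m) / (l - m)))
      = (((l.im * (1 + ‖m‖ ^ 2) + m.im * (1 + ‖l‖ ^ 2)) /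
          ‖l - m‖ ^ 2 : ℝ) : ℂ) ∧
    0 < (l.im * (1 + ‖m‖ ^ 2) + m.im * (1 + ‖l‖ ^ 2)) /
          ‖l - m‖ ^ 2 := by
  refine ⟨?_, ?_⟩
  · rw [I_div_two_mul_sub_mul_conj, im_conj_div_mul_div, im_conj_one_sub_mul_mul_add]
  · have hnorm : 0 < ‖l - m‖ := norm_pos_iff.mpr (sub_ne_zero.mpr hlm)
    positivity
end

section
/- For 0 < s < 1, ∫_{−s}^{s} t log(1+t) / √(s² − t²) dt = π(1 − √(1 − s²)). -/
/-- `∫_{−s}^{s} t log(1+t)/√(s² − t²) dt = π(1 − √(1 − s²))` for `0 < s < 1`. -/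
theorem stmt_15 (s : ℝ) (hs0 : 0 < s) (hs1 : s < 1) :
    ∫ t in (-s)..s, t * Real.log (1 + t) / Real.sqrt (s ^ 2 - t ^ 2)
      = Real.pi * (1 - Real.sqrt (1 - s ^ 2)) := by
  set q : ℝ := Real.sqrt (1 - s ^ 2) with hq
  have hq2 : q ^ 2 = 1 - s ^ 2 := Real.sq_sqrt (by nlinarith)
  have hqpos : 0 < q := Real.sqrt_pos.2 (by nlinarith)
  set F : ℝ → ℝ := fun t => Real.sqrt (s ^ 2 - t ^ 2) * (1 - Real.log (1 + t))
      + Real.arcsin (t / s) - q * Real.arcsin ((t + s ^ 2) / (s * (1 + t))) with hF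
  set g : ℝ → ℝ := fun t => t * Real.log (1 + t) / Real.sqrt (s ^ 2 - t ^ 2) with hg
  have hab : (-s : ℝ) ≤ s := by linarith
  -- continuity of F on Icc
  have h1t : ∀ t ∈ Set.Icc (-s) s, (0:ℝ) < 1 + t := fun t ht => by
    have := ht.1; linarith
  have hcont : ContinuousOn F (Set.Icc (-s) s) := by
    apply ContinuousOn.sub
    apply ContinuousOn.add
    · apply ContinuousOn.mul
      · exact ((continuous_const.sub (continuous_pow 2)).sqrt).continuousOn
      · exact continuousOn_const.sub (ContinuousOn.log
          (continuous_const.add continuous_id).continuousOn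
          (fun t ht => (h1t t ht).ne'))
    · exact Real.continuous_arcsin.comp_continuousOn
        ((continuous_id.div_const s).continuousOn)
    · apply continuousOn_const.mul
      apply Real.continuous_arcsin.comp_continuousOn
      exact ContinuousOn.div (continuous_id.add continuous_const).continuousOn
        (continuous_const.mul (continuous_const.add continuous_id)).continuousOn
        (fun t ht => (mul_pos hs0 (h1t t ht)).ne')
  -- derivative of F on Ioo
  have hderiv : ∀ t ∈ Set.Ioo (-s) s, HasDerivAt F (g t) t := by
    rintro t ⟨ht1, ht2⟩
    have hst : 0 < s ^ 2 - t ^ 2 := by nlinarith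
    have h1tp : 0 < 1 + t := by linarith
    set r : ℝ := Real.sqrt (s ^ 2 - t ^ 2) with hr
    have hr2 : r ^ 2 = s ^ 2 - t ^ 2 := Real.sq_sqrt hst.le
    have hrpos : 0 < r := Real.sqrt_pos.2 hst
    have hid1 : Real.sqrt (1 - (t / s) ^ 2) = r / s := by
      rw [show 1 - (t/s)^2 = (r/s)^2 by rw [div_pow, div_pow, hr2]; field_simp,
        Real.sqrt_sq (by positivity)]
    have hu2 : 1 - ((t + s ^ 2) / (s * (1 + t))) ^ 2
        = (1 - s^2) * (s^2 - t^2) / (s * (1 + t)) ^ 2 := by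
      field_simp; ring
    have hid2 : Real.sqrt (1 - ((t + s ^ 2) / (s * (1 + t))) ^ 2)
        = q * r / (s * (1 + t)) := by
      rw [show 1 - ((t + s ^ 2) / (s * (1 + t))) ^ 2 = (q * r / (s * (1 + t)))^2 by
          rw [hu2, div_pow, mul_pow, mul_pow, hq2, hr2],
        Real.sqrt_sq (by positivity)]
    have hs2 : (0:ℝ) < 1 - s ^ 2 := by nlinarith
    have hupos : 0 < (1 - s^2) * (s^2 - t^2) / (s * (1 + t)) ^ 2 := by positivity
    have hult : ((t + s ^ 2) / (s * (1 + t))) ^ 2 < 1 := by linarith [hu2 ▸ hupos]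
    have hune1 : (t + s ^ 2) / (s * (1 + t)) ≠ 1 := by
      intro h; rw [h] at hult; norm_num at hult
    have hune2 : (t + s ^ 2) / (s * (1 + t)) ≠ -1 := by
      intro h; rw [h] at hult; norm_num at hult
    have d1 : HasDerivAt (fun x : ℝ => s ^ 2 - x ^ 2) (-(2 * t)) t := by
      simpa using (hasDerivAt_pow 2 t).const_sub (s ^ 2)
    have dr : HasDerivAt (fun x : ℝ => Real.sqrt (s ^ 2 - x ^ 2)) (-(2 * t) / (2 * r)) t :=
      d1.sqrt hst.ne'
    have dlog : HasDerivAt (fun x : ℝ => 1 - Real.log (1 + x)) (-(1 / (1 + t))) t := by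
      have := (((hasDerivAt_id t).const_add 1).log h1tp.ne').const_sub 1
      simpa using this
    have dA : HasDerivAt (fun x : ℝ => Real.sqrt (s ^ 2 - x ^ 2) * (1 - Real.log (1 + x)))
        (-(2 * t) / (2 * r) * (1 - Real.log (1 + t)) + r * -(1 / (1 + t))) t := dr.mul dlog
    have dB : HasDerivAt (fun x : ℝ => Real.arcsin (x / s))
        (1 / Real.sqrt (1 - (t / s) ^ 2) * (1 / s)) t := by
      have h1 : t / s ≠ -1 := by
        intro h; rw [div_eq_iff hs0.ne'] at h; linarith [h]
      have h2 : t / s ≠ 1 := by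
        intro h; rw [div_eq_iff hs0.ne'] at h; linarith [h]
      exact (Real.hasDerivAt_arcsin h1 h2).comp t ((hasDerivAt_id t).div_const s)
    have du : HasDerivAt (fun x : ℝ => (x + s ^ 2) / (s * (1 + x)))
        ((1 * (s * (1 + t)) - (t + s ^ 2) * s) / (s * (1 + t)) ^ 2) t := by
      have h := ((hasDerivAt_id t).add_const (s ^ 2)).div
        (((hasDerivAt_id t).const_add 1).const_mul s) (by positivity : s * (1+t) ≠ 0)
      simp only [id_eq] at h
      exact h.congr_deriv (by ring)
    have dC : HasDerivAt (fun x : ℝ => Real.arcsin ((x + s ^ 2) / (s * (1 + x))))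
        (1 / Real.sqrt (1 - ((t + s ^ 2) / (s * (1 + t))) ^ 2)
          * ((1 * (s * (1 + t)) - (t + s ^ 2) * s) / (s * (1 + t)) ^ 2)) t :=
      by have := (Real.hasDerivAt_arcsin hune2 hune1).comp t du; exact this
    have dF := (dA.add dB).sub (dC.const_mul q)
    convert dF using 1
    show t * Real.log (1 + t) / Real.sqrt (s ^ 2 - t ^ 2) = _
    rw [hid1, hid2, show Real.sqrt (s ^ 2 - t ^ 2) = r from hr.symm]
    have hrne : r ≠ 0 := hrpos.ne'
    field_simp
    linear_combination hr2
    all_goals rfl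
  -- nonnegativity of g on Ioo
  have hgpos : ∀ t ∈ Set.Ioo (-s) s, 0 ≤ g t := by
    rintro t ⟨ht1, ht2⟩
    apply div_nonneg _ (Real.sqrt_nonneg _)
    rcases le_or_gt 0 t with h | h
    · exact mul_nonneg h (Real.log_nonneg (by linarith))
    · have := Real.log_nonpos (by linarith : (0:ℝ) ≤ 1 + t) (by linarith : 1 + t ≤ 1)
      nlinarith
  -- integrability
  have hint : IntervalIntegrable g MeasureTheory.volume (-s) s := by
    apply intervalIntegral.intervalIntegrable_deriv_of_nonneg (g := F)
    · rwa [Set.uIcc_of_le hab]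
    · rw [min_eq_left hab, max_eq_right hab]; exact hderiv
    · rw [min_eq_left hab, max_eq_right hab]; exact hgpos
  -- FTC
  have key : ∫ t in (-s)..s, g t = F s - F (-s) :=
    intervalIntegral.integral_eq_sub_of_hasDerivAt_of_le hab hcont hderiv hint
  -- endpoint values
  have hFs : F s = Real.pi / 2 - q * (Real.pi / 2) := by
    have e1 : s / s = 1 := div_self hs0.ne'
    have e2 : (s + s ^ 2) / (s * (1 + s)) = 1 := by
      rw [show s + s^2 = s * (1 + s) by ring, div_self (by positivity)]
    simp [hF, e1, e2, Real.arcsin_one]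
  have hFns : F (-s) = -(Real.pi / 2) + q * (Real.pi / 2) := by
    have e1 : -s / s = -1 := by rw [neg_div, div_self hs0.ne']
    have e2 : (-s + s ^ 2) / (s * (1 + -s)) = -1 := by
      rw [show -s + s^2 = -(s * (1 + -s)) by ring, neg_div,
        div_self (by nlinarith : s * (1 + -s) ≠ 0)]
    simp [hF, e1, e2, Real.arcsin_neg, Real.arcsin_one]
  rw [key, hFs, hFns]; ring
end

section
/- Let z' = x' + iy' ∈ ℂ³ with z'² = −1 be in the closure of the chiral tuboid 𝒯_← (parametrized as z' = (sinh Ψ, cosh Ψ sin Θ, cosh Ψ cos Θ) with Ψ = ψ + iφ, Θ = u + iv', tanh v' ≤ −|sin φ|/cosh ψ), and let v > 0, ξ = ξ(φ₀ + iv) = (1, sin(φ₀ + iv), cos(φ₀ + iv)) with φ₀ ∈ [−π/2, π/2]. Then [z'·ξ] ≠ 0. Equivalently: the point W = sinh(ψ + iφ) − cosh(ψ + iφ) cos(u − φ₀ + i(v' − v)) is nonzero, because W lies on an ellipse with foci e^{ψ+iφ} and e^{−(ψ+iφ)} and major axis 2cosh(v − v')|cosh(ψ + iφ)|, and the inequality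 cosh(v − v') > cosh ψ/√(cosh² ψ − sin² φ) (which follows from tanh(v' − v) < −|sin φ|/cosh ψ) ensures the origin is strictly inside this ellipse, hence |e^{ψ+iφ}| + |e^{−(ψ+iφ)}| < 2cosh(v − v')|cosh(ψ+iφ)| and W ≠ 0. -/
/-!
Write `W = sinh Ψ - cosh Ψ · cos Θ` with `Ψ = ψ + iφ`, `Θ = (u - φ₀) + i(v' - v)`. As `Re Θ`
varies, `W` runs over an ellipse with foci `sinh Ψ ± cosh Ψ`, i.e. `e^Ψ` and `-e^{-Ψ}`, and major
axis `2 ‖cosh Ψ‖ cosh (v' - v)`. If `W = 0`, the focal property at the origin gives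
`2 cosh ψ = ‖e^Ψ‖ + ‖e^{-Ψ}‖ = 2 ‖cosh Ψ‖ cosh (v' - v)`. But `tanh (v' - v) < tanh v'`, and
`‖cosh Ψ‖² = cosh² ψ - sin² φ`, so the hypothesis on `tanh v'` puts the origin strictly inside
the ellipse: `cosh ψ < ‖cosh Ψ‖ cosh (v' - v)`.
-/

theorem Real.strictMono_tanh : StrictMono Real.tanh := by
  intro x y hxy
  rw [Real.tanh_eq_sinh_div_cosh, Real.tanh_eq_sinh_div_cosh,
    div_lt_div_iff₀ (Real.cosh_pos x) (Real.cosh_pos y)]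
  have : Real.sinh (x - y) < 0 := Real.sinh_neg_iff.2 (sub_neg.2 hxy)
  linarith [Real.sinh_sub x y]

namespace Complex

theorem sq_norm_sin (z : ℂ) :
    ‖sin z‖ ^ 2 =
      Real.sin z.re ^ 2 * Real.cosh z.im ^ 2 + Real.cos z.re ^ 2 * Real.sinh z.im ^ 2 := by
  rw [sin_eq, ← ofReal_sin, ← ofReal_cos, ← ofReal_cosh, ← ofReal_sinh, ← ofReal_mul,
    ← ofReal_mul, Complex.sq_norm, normSq_add_mul_I]
  ring

theorem sq_norm_cos (z : ℂ) :
    ‖cos z‖ ^ 2 =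
      Real.cos z.re ^ 2 * Real.cosh z.im ^ 2 + Real.sin z.re ^ 2 * Real.sinh z.im ^ 2 := by
  rw [cos_eq, ← ofReal_sin, ← ofReal_cos, ← ofReal_cosh, ← ofReal_sinh, ← ofReal_mul,
    ← ofReal_mul, sub_eq_add_neg, ← neg_mul, ← ofReal_neg, Complex.sq_norm, normSq_add_mul_I]
  ring

theorem sq_norm_sin_add_sq_norm_cos (z : ℂ) :
    ‖sin z‖ ^ 2 + ‖cos z‖ ^ 2 = Real.cosh (2 * z.im) := by
  rw [sq_norm_sin, sq_norm_cos, Real.cosh_two_mul]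
  linear_combination (Real.cosh z.im ^ 2 + Real.sinh z.im ^ 2) * Real.sin_sq_add_cos_sq z.re

theorem sq_norm_cosh (z : ℂ) : ‖cosh z‖ ^ 2 = Real.cosh z.re ^ 2 - Real.sin z.im ^ 2 := by
  rw [← cos_mul_I, sq_norm_cos]
  simp only [mul_re, mul_im, I_re, I_im, mul_zero, mul_one, zero_sub, add_zero, Real.cos_neg,
    Real.sin_neg, neg_sq]
  linear_combination Real.cosh z.re ^ 2 * Real.sin_sq_add_cos_sq z.im
    - Real.sin z.im ^ 2 * Real.cosh_sq z.re

/-- Focal property of the ellipse `{c · cos (a + i Θ.im) : a ∈ ℝ}`, whose foci are `± c`. -/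
theorem norm_mul_cos_sub_add_norm_mul_cos_add (c Θ : ℂ) :
    ‖c * cos Θ - c‖ + ‖c * cos Θ + c‖ = 2 * ‖c‖ * Real.cosh Θ.im := by
  have hsub : c * cos Θ - c = -(2 * c * sin (Θ / 2) ^ 2) := by
    rw [show Θ = 2 * (Θ / 2) by ring, cos_two_mul, cos_sq']
    ring_nf
  have hadd : c * cos Θ + c = 2 * c * cos (Θ / 2) ^ 2 := by
    rw [show Θ = 2 * (Θ / 2) by ring, cos_two_mul]
    ring_nf
  simp only [hsub, hadd, norm_neg, norm_mul, norm_pow, Complex.norm_two]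
  rw [← mul_add, sq_norm_sin_add_sq_norm_cos, div_ofNat_im, mul_div_cancel₀ _ two_ne_zero]

theorem cosh_re_eq_norm_cosh_mul_cosh_im_of_sinh_eq {Ψ Θ : ℂ} (h : sinh Ψ = cosh Ψ * cos Θ) :
    Real.cosh Ψ.re = ‖cosh Ψ‖ * Real.cosh Θ.im := by
  have foci := norm_mul_cos_sub_add_norm_mul_cos_add (cosh Ψ) Θ
  rw [← h, norm_sub_rev, cosh_sub_sinh, sinh_add_cosh, norm_exp, norm_exp, neg_re] at foci
  rw [Real.cosh_eq]
  linarith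

theorem cosh_re_lt_norm_cosh_mul_cosh {Ψ : ℂ} {b : ℝ}
    (h : Real.tanh b < -|Real.sin Ψ.im| / Real.cosh Ψ.re) :
    Real.cosh Ψ.re < ‖cosh Ψ‖ * Real.cosh b := by
  rw [Real.tanh_eq_sinh_div_cosh, div_lt_div_iff₀ (Real.cosh_pos b) (Real.cosh_pos Ψ.re)] at h
  have hsq := pow_lt_pow_left₀
    (show |Real.sin Ψ.im| * Real.cosh b < -(Real.cosh Ψ.re * Real.sinh b) by linarith)
    (by positivity) two_ne_zero
  rw [neg_sq, mul_pow, mul_pow, sq_abs] at hsq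
  refine lt_of_pow_lt_pow_left₀ 2 (by positivity) ?_
  rw [mul_pow, sq_norm_cosh]
  linear_combination hsq - Real.cosh Ψ.re ^ 2 * Real.cosh_sq b

end Complex

open Complex

theorem stmt_19_general (ψ φ u v' v φ₀ : ℝ) (hv : 0 < v)
    (hz' : Real.tanh v' ≤ -|Real.sin φ| / Real.cosh ψ) :
    Complex.sinh ((ψ : ℂ) + I * φ) -
        Complex.cosh ((ψ : ℂ) + I * φ) *
          Complex.cos (((u - φ₀ : ℝ) : ℂ) + I * ((v' - v : ℝ) : ℂ)) ≠ 0 := by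
  set Ψ : ℂ := ψ + I * φ
  set Θ : ℂ := ((u - φ₀ : ℝ) : ℂ) + I * ((v' - v : ℝ) : ℂ)
  obtain ⟨hre, him⟩ : Ψ.re = ψ ∧ Ψ.im = φ := by simp [Ψ]
  have hΘ : Θ.im = v' - v := by simp [Θ]
  have hinside : Real.cosh Ψ.re < ‖cosh Ψ‖ * Real.cosh Θ.im := by
    apply cosh_re_lt_norm_cosh_mul_cosh
    rw [hre, him, hΘ]
    exact (Real.strictMono_tanh (by linarith)).trans_le hz'
  intro h
  have honEllipse := cosh_re_eq_norm_cosh_mul_cosh_im_of_sinh_eq (sub_eq_zero.1 h)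
  linarith

/-- Non-vanishing of `[z'·ξ]` for `z'` in the closure of the chiral tuboid `𝒯_←` and
`ξ` on the cycle `γ(z_v)` in `C_→` (`v > 0`): writing `Ψ = ψ + iφ`, the point
`sinh Ψ − cosh Ψ · cos((u − φ₀) + i(v' − v))` is nonzero whenever
`tanh v' ≤ −|sin φ|/cosh ψ`, `v > 0` and `φ₀ ∈ [−π/2, π/2]`. -/
theorem stmt_19 (ψ φ u v' v φ₀ : ℝ) (hv : 0 < v)
    (hz' : Real.tanh v' ≤ -|Real.sin φ| / Real.cosh ψ)
    (hφ₀ : φ₀ ∈ Set.Icc (-(Real.pi / 2)) (Real.pi / 2)) :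
    Complex.sinh ((ψ : ℂ) + I * φ) -
        Complex.cosh ((ψ : ℂ) + I * φ) *
          Complex.cos (((u - φ₀ : ℝ) : ℂ) + I * ((v' - v : ℝ) : ℂ)) ≠ 0 :=
  stmt_19_general ψ φ u v' v φ₀ hv hz'
end
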